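/- arXiv:1311.6425 — 3 statements merged into one kernel-verified Lean document; each statement's English description precedes it below -/
import Mathlib

section
/- Let A and B be the adjacency matrices of two isomorphic undirected unweighted graphs on p vertices with e edges and no self-loops, so that A = P₀ B P₀ᵀ for some p×p permutation matrix P₀. Then the minimum over the set 𝒟 of p×p doubly stochastic matrices of the objective f(P) = Σ_{i,j} ‖((AP)_{ij}, (PB)_{ij})‖₂ equals 2√2·e, and this minimum is attained at P₀. Moreover, every doubly stochastic matrix P achieving this minimum satisfies AP = PB. -/
open Matrix BigOperators Finset

/-- `A` is the adjacency matrix of an undirected unweighted graph on `p` vertices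
with `e` edges and no self-loops: symmetric, 0/1 entries, zero diagonal,
and total entry sum `2 e`. -/
def IsAdjacencyMatrix {p : ℕ} (A : Matrix (Fin p) (Fin p) ℝ) (e : ℕ) : Prop :=
  Aᵀ = A ∧ (∀ i j, A i j = 0 ∨ A i j = 1) ∧ (∀ i, A i i = 0) ∧
    (∑ i, ∑ j, A i j) = 2 * e

/-- `P` is doubly stochastic: nonnegative entries, all row and column sums equal 1. -/
def IsDoublyStochastic {p : ℕ} (P : Matrix (Fin p) (Fin p) ℝ) : Prop :=
  (∀ i j, 0 ≤ P i j) ∧ (∀ i, ∑ j, P i j = 1) ∧ (∀ j, ∑ i, P i j = 1)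

/-- `P` is a permutation matrix: 0/1 entries with exactly one 1 in each row and column. -/
def IsPermMatrix {p : ℕ} (P : Matrix (Fin p) (Fin p) ℝ) : Prop :=
  (∀ i j, P i j = 0 ∨ P i j = 1) ∧ (∀ i, ∃! j, P i j = 1) ∧ (∀ j, ∃! i, P i j = 1)

/-- The group-lasso graph matching objective
`f(P) = ∑_{i,j} ‖((AP)_{ij}, (PB)_{ij})‖₂`. -/
noncomputable def glagObj {p : ℕ} (A B P : Matrix (Fin p) (Fin p) ℝ) : ℝ :=
  ∑ i, ∑ j, Real.sqrt (((A * P) i j) ^ 2 + ((P * B) i j) ^ 2)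

/-!
For every pair of reals, `√2 (x + y) ≤ 2 √(x² + y²)`, with equality only if `x = y`.
Summed over the entries of `AP` and `PB`, the left-hand side only sees the entry sums of
`AP` and `PB`, which equal the entry sum `2e` of `A` and of `B` as soon as `P` is doubly
stochastic. Hence `f(P) ≥ 2√2 e` on `𝒟`, equality forces `AP = PB` entrywise, and the
permutation matrix `P₀` attains the bound because `P₀ᵀ P₀ = 1` gives `AP₀ = P₀B`.
-/

lemma sqrt_two_mul_add_le_two_mul_sqrt_sq_add_sq (x y : ℝ) :
    √2 * (x + y) ≤ 2 * √(x ^ 2 + y ^ 2) := by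
  have h2 := Real.sq_sqrt (show (0 : ℝ) ≤ 2 by norm_num)
  have hs := Real.sq_sqrt (add_nonneg (sq_nonneg x) (sq_nonneg y))
  apply abs_le_of_sq_le_sq' _ (by positivity) |>.2
  nlinarith [sq_nonneg (x - y)]

lemma eq_of_sqrt_two_mul_add_eq_two_mul_sqrt_sq_add_sq {x y : ℝ}
    (h : √2 * (x + y) = 2 * √(x ^ 2 + y ^ 2)) : x = y := by
  have h2 := Real.sq_sqrt (show (0 : ℝ) ≤ 2 by norm_num)
  have hs := Real.sq_sqrt (add_nonneg (sq_nonneg x) (sq_nonneg y))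
  have hsq : (x - y) ^ 2 = 0 := by nlinarith [congrArg (· ^ 2) h]
  exact sub_eq_zero.1 (pow_eq_zero_iff two_ne_zero |>.1 hsq)

lemma sum_eq_one_of_eq_zero_or_one_of_existsUnique {ι R : Type*} [Fintype ι]
    [AddCommMonoidWithOne R] {v : ι → R} (h01 : ∀ i, v i = 0 ∨ v i = 1)
    (h1 : ∃! i, v i = 1) : ∑ i, v i = 1 := by
  obtain ⟨i₀, hi₀, huniq⟩ := h1
  rw [Finset.sum_eq_single i₀ (fun i _ hi => (h01 i).resolve_right (mt (huniq i) hi))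
    (by simp), hi₀]

namespace Matrix

variable {l m n R : Type*} [Fintype m]

lemma sum_sum_mul_apply_of_sum_row_eq_one [Fintype l] [Fintype n] [NonAssocSemiring R]
    (M : Matrix l m R) {N : Matrix m n R} (hN : ∀ k, ∑ j, N k j = 1) :
    ∑ i, ∑ j, (M * N) i j = ∑ i, ∑ k, M i k := by
  refine Finset.sum_congr rfl fun i _ => ?_
  simp only [mul_apply]
  rw [Finset.sum_comm]
  simp only [← Finset.mul_sum, hN, mul_one]

lemma sum_sum_mul_apply_of_sum_col_eq_one [Fintype l] [Fintype n] [NonAssocSemiring R]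
    {N : Matrix l m R} (M : Matrix m n R) (hN : ∀ k, ∑ i, N i k = 1) :
    ∑ i, ∑ j, (N * M) i j = ∑ k, ∑ j, M k j :=
  calc ∑ i, ∑ j, (N * M) i j = ∑ j, ∑ i, ∑ k, N i k * M k j := Finset.sum_comm
    _ = ∑ j, ∑ k, M k j := by
      refine Finset.sum_congr rfl fun j _ => ?_
      rw [Finset.sum_comm]
      simp only [← Finset.sum_mul, hN, one_mul]
    _ = ∑ k, ∑ j, M k j := Finset.sum_comm

lemma mul_apply_nonneg [Semiring R] [PartialOrder R] [IsOrderedRing R]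
    {M : Matrix l m R} {N : Matrix m n R}
    (hM : ∀ i k, 0 ≤ M i k) (hN : ∀ k j, 0 ≤ N k j) (i : l) (j : n) :
    0 ≤ (M * N) i j :=
  Finset.sum_nonneg fun k _ => mul_nonneg (hM i k) (hN k j)

end Matrix

section

variable {p : ℕ}

lemma IsAdjacencyMatrix.nonneg {A : Matrix (Fin p) (Fin p) ℝ} {e : ℕ}
    (hA : IsAdjacencyMatrix A e) (i j : Fin p) : 0 ≤ A i j := by
  rcases hA.2.1 i j with h | h <;> simp [h]

lemma IsPermMatrix.isDoublyStochastic {P : Matrix (Fin p) (Fin p) ℝ} (hP : IsPermMatrix P) :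
    IsDoublyStochastic P := by
  obtain ⟨h01, hrow, hcol⟩ := hP
  exact ⟨fun i j => by rcases h01 i j with h | h <;> simp [h],
    fun i => sum_eq_one_of_eq_zero_or_one_of_existsUnique (h01 i) (hrow i),
    fun j => sum_eq_one_of_eq_zero_or_one_of_existsUnique (h01 · j) (hcol j)⟩

lemma IsPermMatrix.transpose_mul_self {P : Matrix (Fin p) (Fin p) ℝ} (hP : IsPermMatrix P) :
    Pᵀ * P = 1 := by
  have hcol := hP.isDoublyStochastic.2.2
  obtain ⟨h01, hrow, -⟩ := hP
  ext j j'
  simp only [mul_apply, transpose_apply, one_apply]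
  split_ifs with hjj'
  · subst hjj'
    have hidem : ∀ i, P i j * P i j = P i j := fun i => by
      rcases h01 i j with h | h <;> simp [h]
    simpa only [hidem] using hcol j
  · refine Finset.sum_eq_zero fun i _ => ?_
    rcases h01 i j with h | h
    · simp [h]
    rcases h01 i j' with h' | h'
    · simp [h']
    exact absurd ((hrow i).unique h h') hjj'

lemma sqrt_two_mul_sum_le_two_mul_glagObj (A B P : Matrix (Fin p) (Fin p) ℝ) :
    √2 * ∑ i, ∑ j, ((A * P) i j + (P * B) i j) ≤ 2 * glagObj A B P := by
  simp only [glagObj, Finset.mul_sum]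
  exact Finset.sum_le_sum fun i _ => Finset.sum_le_sum fun j _ =>
    sqrt_two_mul_add_le_two_mul_sqrt_sq_add_sq _ _

lemma mul_eq_mul_of_two_mul_glagObj_eq {A B P : Matrix (Fin p) (Fin p) ℝ}
    (h : 2 * glagObj A B P = √2 * ∑ i, ∑ j, ((A * P) i j + (P * B) i j)) :
    A * P = P * B := by
  simp only [glagObj, Finset.mul_sum] at h
  have hrow := (Finset.sum_eq_sum_iff_of_le fun i _ => Finset.sum_le_sum fun j _ =>
    sqrt_two_mul_add_le_two_mul_sqrt_sq_add_sq ((A * P) i j) ((P * B) i j)).1 h.symm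
  ext i j
  have hij := (Finset.sum_eq_sum_iff_of_le fun j _ =>
    sqrt_two_mul_add_le_two_mul_sqrt_sq_add_sq ((A * P) i j) ((P * B) i j)).1
      (hrow i (Finset.mem_univ i))
  exact eq_of_sqrt_two_mul_add_eq_two_mul_sqrt_sq_add_sq (hij j (Finset.mem_univ j))

lemma glagObj_eq_of_mul_eq_mul {A B P : Matrix (Fin p) (Fin p) ℝ} (hAP : A * P = P * B)
    (hnonneg : ∀ i j, 0 ≤ (A * P) i j) :
    glagObj A B P = √2 * ∑ i, ∑ j, (A * P) i j := by
  simp only [glagObj, Finset.mul_sum, ← hAP]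
  refine Finset.sum_congr rfl fun i _ => Finset.sum_congr rfl fun j _ => ?_
  rw [← two_mul, Real.sqrt_mul zero_le_two, Real.sqrt_sq (hnonneg i j)]

lemma sum_sum_mul_add_mul_eq {A B P : Matrix (Fin p) (Fin p) ℝ} {e : ℕ}
    (hA : IsAdjacencyMatrix A e) (hB : IsAdjacencyMatrix B e) (hP : IsDoublyStochastic P) :
    ∑ i, ∑ j, ((A * P) i j + (P * B) i j) = 4 * e := by
  simp only [Finset.sum_add_distrib]
  rw [sum_sum_mul_apply_of_sum_row_eq_one A hP.2.1,
    sum_sum_mul_apply_of_sum_col_eq_one B hP.2.2, hA.2.2.2, hB.2.2.2]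
  ring

end

theorem stmt0 {p e : ℕ} (A B P₀ : Matrix (Fin p) (Fin p) ℝ)
    (hA : IsAdjacencyMatrix A e) (hB : IsAdjacencyMatrix B e)
    (hP₀ : IsPermMatrix P₀) (hAB : A = P₀ * B * P₀ᵀ) :
    (∀ P : Matrix (Fin p) (Fin p) ℝ, IsDoublyStochastic P →
        2 * Real.sqrt 2 * e ≤ glagObj A B P) ∧
    IsDoublyStochastic P₀ ∧
    glagObj A B P₀ = 2 * Real.sqrt 2 * e ∧
    (∀ P : Matrix (Fin p) (Fin p) ℝ, IsDoublyStochastic P →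
        glagObj A B P = 2 * Real.sqrt 2 * e → A * P = P * B) := by
  have hP₀DS := hP₀.isDoublyStochastic
  have hAP₀ : A * P₀ = P₀ * B := by
    rw [hAB, Matrix.mul_assoc, hP₀.transpose_mul_self, Matrix.mul_one]
  refine ⟨fun P hP => ?_, hP₀DS, ?_, fun P hP hf => mul_eq_mul_of_two_mul_glagObj_eq ?_⟩
  · have hlower := sqrt_two_mul_sum_le_two_mul_glagObj A B P
    rw [sum_sum_mul_add_mul_eq hA hB hP] at hlower
    linarith
  · rw [glagObj_eq_of_mul_eq_mul hAP₀ (mul_apply_nonneg hA.nonneg hP₀DS.1),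
      sum_sum_mul_apply_of_sum_row_eq_one A hP₀DS.2.1, hA.2.2.2]
    ring
  · rw [sum_sum_mul_add_mul_eq hA hB hP, hf]
    ring
end

section
/- Let A and B be the adjacency matrices of two isomorphic undirected unweighted graphs on p vertices with e edges and no self-loops, so that A = P₀ B P₀ᵀ for some p×p permutation matrix P₀. Then for every p×p doubly stochastic matrix P, one has f(P) = Σ_{i,j} √((AP)_{ij}² + (PB)_{ij}²) ≥ 2√2·e. -/
open Matrix BigOperators Finset

theorem stmt1 {p e : ℕ} (A B P₀ : Matrix (Fin p) (Fin p) ℝ)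
    (hA : IsAdjacencyMatrix A e) (hB : IsAdjacencyMatrix B e)
    (hP₀ : IsPermMatrix P₀) (hAB : A = P₀ * B * P₀ᵀ) :
    ∀ P : Matrix (Fin p) (Fin p) ℝ, IsDoublyStochastic P →
      2 * Real.sqrt 2 * e ≤
        ∑ i, ∑ j, Real.sqrt (((A * P) i j) ^ 2 + ((P * B) i j) ^ 2) := by
  intro P hP
  obtain ⟨hPnn, hProw, hPcol⟩ := hP
  obtain ⟨_, hA01, _, hAsum⟩ := hA
  obtain ⟨_, hB01, _, hBsum⟩ := hB
  have hAnn : ∀ i j, 0 ≤ A i j := fun i j => by rcases hA01 i j with h | h <;> simp [h]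
  have hBnn : ∀ i j, 0 ≤ B i j := fun i j => by rcases hB01 i j with h | h <;> simp [h]
  have hAPnn : ∀ i j, 0 ≤ (A * P) i j := fun i j => by
    rw [Matrix.mul_apply]
    exact Finset.sum_nonneg fun k _ => mul_nonneg (hAnn i k) (hPnn k j)
  have hPBnn : ∀ i j, 0 ≤ (P * B) i j := fun i j => by
    rw [Matrix.mul_apply]
    exact Finset.sum_nonneg fun k _ => mul_nonneg (hPnn i k) (hBnn k j)
  have hAPsum : ∑ i, ∑ j, (A * P) i j = 2 * e := by
    simp only [Matrix.mul_apply]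
    calc ∑ i, ∑ j, ∑ k, A i k * P k j
        = ∑ i, ∑ k, A i k * ∑ j, P k j := by
          refine Finset.sum_congr rfl fun i _ => ?_
          rw [Finset.sum_comm]
          simp [Finset.mul_sum]
      _ = 2 * e := by simp only [hProw, mul_one]; exact hAsum
  have hPBsum : ∑ i, ∑ j, (P * B) i j = 2 * e := by
    simp only [Matrix.mul_apply]
    calc ∑ i, ∑ j, ∑ k, P i k * B k j
        = ∑ i, ∑ k, P i k * ∑ j, B k j := by
          refine Finset.sum_congr rfl fun i _ => ?_
          rw [Finset.sum_comm]
          simp [Finset.mul_sum]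
      _ = ∑ k, (∑ i, P i k) * ∑ j, B k j := by
          rw [Finset.sum_comm]
          simp [Finset.sum_mul]
      _ = 2 * e := by simp only [hPcol, one_mul]; exact hBsum
  have key : ∀ x y : ℝ, 0 ≤ x → 0 ≤ y → (x + y) / Real.sqrt 2 ≤ Real.sqrt (x ^ 2 + y ^ 2) := by
    intro x y hx hy
    have h1 : (x + y) / Real.sqrt 2 = Real.sqrt ((x + y) ^ 2 / 2) := by
      rw [Real.sqrt_div (by positivity), Real.sqrt_sq (by positivity)]
    rw [h1]
    exact Real.sqrt_le_sqrt (by nlinarith [sq_nonneg (x - y)])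
  have hs2 : Real.sqrt 2 * Real.sqrt 2 = 2 := Real.mul_self_sqrt (by norm_num)
  have hs2pos : (0:ℝ) < Real.sqrt 2 := by positivity
  calc 2 * Real.sqrt 2 * e
      = ((2 * e : ℝ) + 2 * e) / Real.sqrt 2 := by
        rw [eq_div_iff (ne_of_gt hs2pos)]; nlinarith [hs2]
    _ = ∑ i, ∑ j, ((A * P) i j + (P * B) i j) / Real.sqrt 2 := by
        simp only [add_div, Finset.sum_add_distrib, ← Finset.sum_div, hAPsum, hPBsum]
    _ ≤ ∑ i, ∑ j, Real.sqrt (((A * P) i j) ^ 2 + ((P * B) i j) ^ 2) := by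
        refine Finset.sum_le_sum fun i _ => Finset.sum_le_sum fun j _ => ?_
        exact key _ _ (hAPnn i j) (hPBnn i j)
end

section
/- Let A and B be the adjacency matrices of two isomorphic undirected unweighted graphs on p vertices with e edges and no self-loops, so that A = P₀ B P₀ᵀ for some p×p permutation matrix P₀. Then for a p×p doubly stochastic matrix P, the equality f(P) = Σ_{i,j} √((AP)_{ij}² + (PB)_{ij}²) = 2√2·e holds if and only if AP = PB. -/
open Matrix BigOperators Finset

lemma aux_le (x y : ℝ) (hx : 0 ≤ x) (hy : 0 ≤ y) :
    (x + y) / Real.sqrt 2 ≤ Real.sqrt (x ^ 2 + y ^ 2) := by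
  rw [div_le_iff₀ (by positivity)]
  have h2 : Real.sqrt (x ^ 2 + y ^ 2) * Real.sqrt 2 = Real.sqrt ((x ^ 2 + y ^ 2) * 2) :=
    (Real.sqrt_mul (by positivity) 2).symm
  rw [h2]
  rw [show x + y = Real.sqrt ((x + y) ^ 2) by rw [Real.sqrt_sq (by positivity)]]
  apply Real.sqrt_le_sqrt
  nlinarith [sq_nonneg (x - y)]

lemma aux_eq (x y : ℝ) (hx : 0 ≤ x) (hy : 0 ≤ y)
    (h : Real.sqrt (x ^ 2 + y ^ 2) = (x + y) / Real.sqrt 2) : x = y := by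
  have hs : Real.sqrt 2 ^ 2 = 2 := Real.sq_sqrt (by norm_num)
  have h2 : x ^ 2 + y ^ 2 = ((x + y) / Real.sqrt 2) ^ 2 := by
    rw [← h, Real.sq_sqrt (by positivity)]
  rw [div_pow, hs] at h2
  nlinarith [sq_nonneg (x - y)]

theorem stmt3 {p e : ℕ} (A B P₀ P : Matrix (Fin p) (Fin p) ℝ)
    (hA : IsAdjacencyMatrix A e) (hB : IsAdjacencyMatrix B e)
    (hP₀ : IsPermMatrix P₀) (hAB : A = P₀ * B * P₀ᵀ)
    (hP : IsDoublyStochastic P) :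
    (∑ i, ∑ j, Real.sqrt (((A * P) i j) ^ 2 + ((P * B) i j) ^ 2))
        = 2 * Real.sqrt 2 * e ↔ A * P = P * B := by
  obtain ⟨hPnn, hProw, hPcol⟩ := hP
  have hAnn : ∀ i j, 0 ≤ A i j := fun i j => by rcases hA.2.1 i j with h | h <;> simp [h]
  have hBnn : ∀ i j, 0 ≤ B i j := fun i j => by rcases hB.2.1 i j with h | h <;> simp [h]
  have hAPnn : ∀ i j, 0 ≤ (A * P) i j := fun i j => by
    rw [Matrix.mul_apply]; exact Finset.sum_nonneg fun k _ => mul_nonneg (hAnn i k) (hPnn k j)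
  have hPBnn : ∀ i j, 0 ≤ (P * B) i j := fun i j => by
    rw [Matrix.mul_apply]; exact Finset.sum_nonneg fun k _ => mul_nonneg (hPnn i k) (hBnn k j)
  have hAPsum : ∑ i, ∑ j, (A * P) i j = 2 * e := by
    calc ∑ i, ∑ j, (A * P) i j
        = ∑ i, ∑ k, A i k * ∑ j, P k j := by
          simp only [Matrix.mul_apply]
          refine Finset.sum_congr rfl fun i _ => ?_
          rw [Finset.sum_comm]
          exact Finset.sum_congr rfl fun k _ => (Finset.mul_sum _ _ _).symm
      _ = ∑ i, ∑ k, A i k := by simp [hProw]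
      _ = 2 * e := hA.2.2.2
  have hPBsum : ∑ i, ∑ j, (P * B) i j = 2 * e := by
    calc ∑ i, ∑ j, (P * B) i j
        = ∑ i, ∑ k, P i k * ∑ j, B k j := by
          simp only [Matrix.mul_apply]
          refine Finset.sum_congr rfl fun i _ => ?_
          rw [Finset.sum_comm]
          exact Finset.sum_congr rfl fun k _ => (Finset.mul_sum _ _ _).symm
      _ = ∑ k, (∑ i, P i k) * ∑ j, B k j := by
          rw [Finset.sum_comm]
          exact Finset.sum_congr rfl fun k _ => (Finset.sum_mul _ _ _).symm
      _ = ∑ k, ∑ j, B k j := by simp [hPcol]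
      _ = 2 * e := hB.2.2.2
  have hsqrt2 : Real.sqrt 2 > 0 := by positivity
  constructor
  · intro hsum
    have hg : ∀ i ∈ Finset.univ, ∀ j ∈ Finset.univ,
        (0:ℝ) ≤ Real.sqrt (((A * P) i j) ^ 2 + ((P * B) i j) ^ 2)
          - ((A * P) i j + (P * B) i j) / Real.sqrt 2 := fun i _ j _ =>
      sub_nonneg.mpr (aux_le _ _ (hAPnn i j) (hPBnn i j))
    have hgsum : ∑ i, ∑ j, (Real.sqrt (((A * P) i j) ^ 2 + ((P * B) i j) ^ 2)
          - ((A * P) i j + (P * B) i j) / Real.sqrt 2) = 0 := by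
      have hdiv : ∑ i, ∑ j, ((A * P) i j + (P * B) i j) / Real.sqrt 2
          = (2 * e + 2 * e) / Real.sqrt 2 := by
        simp only [← Finset.sum_div, Finset.sum_add_distrib, hAPsum, hPBsum]
      have h24 : (2 * (e:ℝ) + 2 * e) / Real.sqrt 2 = 2 * Real.sqrt 2 * e := by
        rw [div_eq_iff (ne_of_gt hsqrt2)]
        have : Real.sqrt 2 * Real.sqrt 2 = 2 := Real.mul_self_sqrt (by norm_num)
        nlinarith
      simp only [Finset.sum_sub_distrib]
      rw [hsum, hdiv, h24, sub_self]
    ext i j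
    have h0 : ∀ i ∈ Finset.univ, (0:ℝ) ≤ ∑ j, (Real.sqrt (((A * P) i j) ^ 2 + ((P * B) i j) ^ 2)
          - ((A * P) i j + (P * B) i j) / Real.sqrt 2) := fun i hi =>
      Finset.sum_nonneg fun j hj => hg i hi j hj
    have h1 := (Finset.sum_eq_zero_iff_of_nonneg h0).mp hgsum i (Finset.mem_univ i)
    have h2 := (Finset.sum_eq_zero_iff_of_nonneg (fun j hj => hg i (Finset.mem_univ i) j hj)).mp
      h1 j (Finset.mem_univ j)
    have h3 : Real.sqrt (((A * P) i j) ^ 2 + ((P * B) i j) ^ 2)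
        = ((A * P) i j + (P * B) i j) / Real.sqrt 2 := by linarith [h2]
    exact aux_eq _ _ (hAPnn i j) (hPBnn i j) h3
  · intro heq
    have : ∀ i j, Real.sqrt (((A * P) i j) ^ 2 + ((P * B) i j) ^ 2)
        = Real.sqrt 2 * (A * P) i j := by
      intro i j
      rw [← heq]
      rw [show ((A * P) i j) ^ 2 + ((A * P) i j) ^ 2 = 2 * ((A * P) i j) ^ 2 by ring]
      rw [Real.sqrt_mul (by norm_num), Real.sqrt_sq (hAPnn i j)]
    simp only [this, ← Finset.mul_sum]
    rw [hAPsum]; ring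
end
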